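/- arXiv:1810.10047 — 9 statements merged into one kernel-verified Lean document; each statement's English description precedes it below -/
import Mathlib

section
/- If a finite group G admits a 1-rotational k-factorization of the complete graph on G ∪ {∞}, then k divides the order of G. -/
open SimpleGraph

/-- The image of a graph on `G ∪ {∞}` under right multiplication by `g` (with `∞ g = ∞`). -/
def shiftG {G : Type*} [Group G] (F : SimpleGraph (Option G)) (g : G) :
    SimpleGraph (Option G) :=
  F.map (Equiv.optionCongr (Equiv.mulRight g)).toEmbedding

/-- The `G`-stabilizer of a graph on `G ∪ {∞}`. -/
def stabG {G : Type*} [Group G] (F : SimpleGraph (Option G)) : Set G :=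
  {g | shiftG F g = F}

/-- A `k`-factor: a spanning `k`-regular subgraph of the complete graph. -/
def IsKFactor {V : Type*} (k : ℕ) (F : SimpleGraph V) : Prop :=
  ∀ v : V, (F.neighborSet v).ncard = k

/-- A `k`-factorization: a set of `k`-factors whose edges partition the complete graph. -/
def IsKFactorization {V : Type*} (k : ℕ) (𝓕 : Set (SimpleGraph V)) : Prop :=
  (∀ F ∈ 𝓕, IsKFactor k F) ∧
  ∀ u v : V, u ≠ v → ∃! F, F ∈ 𝓕 ∧ F.Adj u v

/-- A family of graphs on `G ∪ {∞}` is `1`-rotational if it is closed under the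
right multiplication action of `G`. -/
def IsRotational {G : Type*} [Group G] (𝓕 : Set (SimpleGraph (Option G))) : Prop :=
  ∀ F ∈ 𝓕, ∀ g : G, shiftG F g ∈ 𝓕

theorem stmt0 {G : Type*} [Group G] [Fintype G] (k : ℕ)
    (𝓕 : Set (SimpleGraph (Option G)))
    (hfac : IsKFactorization k 𝓕) (hrot : IsRotational 𝓕) :
    k ∣ Fintype.card G := by
  classical
  obtain ⟨hreg, huniq⟩ := hfac
  set f : G → SimpleGraph (Option G) :=
    fun g => (huniq none (some g) (by simp)).choose with hf
  have hfspec : ∀ g : G, f g ∈ 𝓕 ∧ (f g).Adj none (some g) := fun g =>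
    (huniq none (some g) (by simp)).choose_spec.1
  have hfuniq : ∀ g : G, ∀ F, F ∈ 𝓕 ∧ F.Adj none (some g) → F = f g := fun g F h =>
    (huniq none (some g) (by simp)).choose_spec.2 F h
  set T : Finset (SimpleGraph (Option G)) := Finset.univ.image f with hT
  have hcard : Fintype.card G = ∑ F ∈ T, (Finset.univ.filter (fun g => f g = F)).card := by
    rw [← Finset.card_univ]
    exact Finset.card_eq_sum_card_fiberwise
      (fun g _ => Finset.mem_image_of_mem f (Finset.mem_univ g))
  have hfiber : ∀ F ∈ T, (Finset.univ.filter (fun g => f g = F)).card = k := by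
    intro F hF
    obtain ⟨g0, _, hg0⟩ := Finset.mem_image.mp hF
    have hFmem : F ∈ 𝓕 := hg0 ▸ (hfspec g0).1
    have hiff : ∀ g : G, f g = F ↔ F.Adj none (some g) := by
      intro g
      constructor
      · rintro rfl; exact (hfspec g).2
      · intro h; exact (hfuniq g F ⟨hFmem, h⟩).symm
    have hns : F.neighborSet none = some '' {g : G | f g = F} := by
      ext v
      cases v with
      | none => simp [SimpleGraph.mem_neighborSet]
      | some g => simp [SimpleGraph.mem_neighborSet, hiff g]
    have hk := hreg F hFmem none
    rw [hns, Set.ncard_image_of_injective _ (Option.some_injective G)] at hk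
    rw [← hk, ← Set.ncard_coe_finset]
    congr 1
    ext g; simp
  rw [hcard, Finset.sum_congr rfl hfiber, Finset.sum_const, smul_eq_mul]
  exact ⟨T.card, (mul_comm _ _)⟩
end

section
/- Let G be a finite group of even order admitting a 1-rotational k-factorization F of the complete graph on G ∪ {∞}. Then k is even, and every involution of G lies in the G-stabilizer of some factor F ∈ F. -/
open SimpleGraph

theorem IsKFactor.degree_eq {V : Type*} [Fintype V] {k : ℕ} {F : SimpleGraph V}
    [DecidableRel F.Adj] (hF : IsKFactor k F) (v : V) : F.degree v = k := by
  rw [← card_neighborSet_eq_degree, ← Nat.card_eq_fintype_card, Nat.card_coe_set_eq, hF v]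

theorem IsKFactor.even_card_mul {V : Type*} [Fintype V] {k : ℕ} {F : SimpleGraph V}
    (hF : IsKFactor k F) : Even (Fintype.card V * k) := by
  classical
  have handshake := F.sum_degrees_eq_twice_card_edges
  simp only [hF.degree_eq, Finset.sum_const, Finset.card_univ, smul_eq_mul] at handshake
  exact handshake ▸ even_two_mul _

theorem IsKFactorization.eq_of_adj {V : Type*} {k : ℕ} {𝓕 : Set (SimpleGraph V)}
    (h𝓕 : IsKFactorization k 𝓕) {F F' : SimpleGraph V} (hF : F ∈ 𝓕) (hF' : F' ∈ 𝓕)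
    {u v : V} (huv : F.Adj u v) (huv' : F'.Adj u v) : F = F' :=
  (h𝓕.2 u v huv.ne).unique ⟨hF, huv⟩ ⟨hF', huv'⟩

theorem shiftG_adj_mul {G : Type*} [Group G] {F : SimpleGraph (Option G)} {a b : G}
    (h : F.Adj (some a) (some b)) (g : G) : (shiftG F g).Adj (some (a * g)) (some (b * g)) :=
  ⟨h.ne.imp fun hab => by simpa using hab, _, _, h, rfl, rfl⟩

theorem stmt1 {G : Type*} [Group G] [Fintype G] (k : ℕ)
    (hG : Even (Fintype.card G))
    (𝓕 : Set (SimpleGraph (Option G)))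
    (hfac : IsKFactorization k 𝓕) (hrot : IsRotational 𝓕) :
    Even k ∧ ∀ x : G, orderOf x = 2 → ∃ F ∈ 𝓕, x ∈ stabG F := by
  constructor
  · obtain ⟨F, ⟨hF, -⟩, -⟩ := hfac.2 (some 1) none (Option.some_ne_none 1)
    have hodd : ¬ Even (Fintype.card (Option G)) := by
      rw [Fintype.card_option, Nat.even_add_one, not_not]
      exact hG
    exact (Nat.even_mul.mp (hfac.1 F hF).even_card_mul).resolve_left hodd
  · intro x hx
    have hx1 : x ≠ 1 := by
      rintro rfl
      simp at hx
    have hxx : x * x = 1 := by rw [← pow_two, ← hx, pow_orderOf_eq_one]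
    obtain ⟨F, ⟨hF, hadj⟩, -⟩ := hfac.2 (some 1) (some x) (by simpa using hx1.symm)
    -- `x` swaps the endpoints of the edge `{1, x}`, so `F x` and `F` share it.
    have hadj' : (shiftG F x).Adj (some 1) (some x) := by
      simpa [hxx] using (shiftG_adj_mul hadj x).symm
    exact ⟨F, hF, hfac.eq_of_adj (hrot F hF x) hF hadj' hadj⟩
end

section
/- If a finite group G admits a 1-rotational (2^n·m)-factorization of the complete graph on G ∪ {∞}, where n ≥ 1 and m is odd, then G has at most m(2^n − 1) conjugacy classes containing involutions. -/
/-!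
The stabilizer of the factor `F₀` through the edge `{∞, 1}` is exactly the set of neighbours of
`∞` in `F₀`, so it has order `2^n m`; and any factor can be moved onto `F₀` by right
multiplication, so every stabilizer is conjugate into it. An involution `x` swaps `1` and `x`,
hence fixes the factor containing the edge `{1, x}`. So every class of involutions meets the
stabilizer of `F₀`, whose involutions lie in its at most `m` Sylow `2`-subgroups of order `2^n`.
-/

open SimpleGraph

section Sylow

variable {H : Type*} [Group H] [Finite H] {p n m : ℕ} [Fact p.Prime]

theorem Sylow.card_eq_of_card_eq_pow_mul (hcard : Nat.card H = p ^ n * m) (hpm : ¬ p ∣ m)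
    (P : Sylow p H) : Nat.card P = p ^ n := by
  have hm : m ≠ 0 := by rintro rfl; exact hpm (dvd_zero p)
  rw [P.card_eq_multiplicity, hcard,
    Nat.factorization_mul (pow_ne_zero n (Fact.out : p.Prime).ne_zero) hm, Finsupp.add_apply,
    (Fact.out : p.Prime).factorization_pow, Finsupp.single_eq_same,
    Nat.factorization_eq_zero_of_not_dvd hpm, add_zero]

theorem Sylow.card_le_of_card_eq_pow_mul (hcard : Nat.card H = p ^ n * m) (hpm : ¬ p ∣ m) :
    Nat.card (Sylow p H) ≤ m := by
  have hm : m ≠ 0 := by rintro rfl; exact hpm (dvd_zero p)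
  obtain ⟨P⟩ : Nonempty (Sylow p H) := inferInstance
  have hindex : (P : Subgroup H).index = m := by
    have h := (P : Subgroup H).index_mul_card
    rw [P.card_eq_of_card_eq_pow_mul hcard hpm, hcard, mul_comm (p ^ n)] at h
    exact Nat.eq_of_mul_eq_mul_right (pow_pos (Fact.out : p.Prime).pos n) h
  exact Nat.le_of_dvd (Nat.pos_of_ne_zero hm) (hindex ▸ P.card_dvd_index)

omit [Finite H] [Fact p.Prime] in
theorem exists_sylow_mem_of_orderOf_eq_prime {x : H} (hx : orderOf x = p) :
    ∃ P : Sylow p H, x ∈ P := by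
  have hpx : IsPGroup p (Subgroup.zpowers x) :=
    IsPGroup.of_card (by rw [Nat.card_zpowers, hx, pow_one])
  obtain ⟨P, hP⟩ := hpx.exists_le_sylow
  exact ⟨P, hP (Subgroup.mem_zpowers x)⟩

theorem ncard_orderOf_eq_prime_le (hcard : Nat.card H = p ^ n * m) (hpm : ¬ p ∣ m) :
    {x : H | orderOf x = p}.ncard ≤ m * (p ^ n - 1) := by
  have : Fintype (Sylow p H) := Fintype.ofFinite _
  have hsub : {x : H | orderOf x = p} ⊆ ⋃ P : Sylow p H, ((P : Subgroup H) : Set H) \ {1} := by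
    intro x (hx : orderOf x = p)
    obtain ⟨P, hxP⟩ := exists_sylow_mem_of_orderOf_eq_prime hx
    have hx1 : x ≠ 1 := by
      rintro rfl
      rw [orderOf_one] at hx
      exact (Fact.out : p.Prime).ne_one hx.symm
    exact Set.mem_iUnion.2 ⟨P, hxP, hx1⟩
  have hcardP (P : Sylow p H) : (((P : Subgroup H) : Set H) \ {1}).ncard = p ^ n - 1 := by
    rw [Set.ncard_sdiff_singleton_of_mem (P : Subgroup H).one_mem, ← Nat.card_coe_set_eq,
      SetLike.coe_sort_coe, P.card_eq_of_card_eq_pow_mul hcard hpm]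
  calc {x : H | orderOf x = p}.ncard
      ≤ (⋃ P : Sylow p H, ((P : Subgroup H) : Set H) \ {1}).ncard := Set.ncard_le_ncard hsub
    _ ≤ ∑ P : Sylow p H, (((P : Subgroup H) : Set H) \ {1}).ncard :=
        Set.ncard_iUnion_le_of_fintype _
    _ = Nat.card (Sylow p H) * (p ^ n - 1) := by
        rw [Finset.sum_congr rfl fun P _ => hcardP P, Finset.sum_const, Finset.card_univ,
          smul_eq_mul, Nat.card_eq_fintype_card]
    _ ≤ m * (p ^ n - 1) := Nat.mul_le_mul_right _ (Sylow.card_le_of_card_eq_pow_mul hcard hpm)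

end Sylow

section Shift

variable {G : Type*} [Group G]

theorem shiftG_mul (F : SimpleGraph (Option G)) (g h : G) :
    shiftG F (g * h) = shiftG (shiftG F g) h := by
  unfold shiftG
  rw [SimpleGraph.map_map]
  congr 1
  ext x
  cases x <;> simp [mul_assoc]

theorem shiftG_one (F : SimpleGraph (Option G)) : shiftG F 1 = F := by
  have : (Equiv.optionCongr (Equiv.mulRight (1 : G))).toEmbedding = Function.Embedding.refl _ := by
    ext x; cases x <;> simp
  rw [shiftG, this]
  exact SimpleGraph.map_id F

theorem shiftG_adj_map_mul (F : SimpleGraph (Option G)) (g : G) {a b : Option G} :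
    (shiftG F g).Adj (a.map (· * g)) (b.map (· * g)) ↔ F.Adj a b := by
  have h (x : Option G) : x.map (· * g) = (Equiv.optionCongr (Equiv.mulRight g)).toEmbedding x := by
    cases x <;> rfl
  rw [h a, h b]
  exact SimpleGraph.map_adj_apply

def stabSubgroup (F : SimpleGraph (Option G)) : Subgroup G where
  carrier := stabG F
  one_mem' := shiftG_one F
  mul_mem' {a b} (ha : shiftG F a = F) (hb : shiftG F b = F) := by
    show shiftG F (a * b) = F
    rw [shiftG_mul, ha, hb]
  inv_mem' {a} (ha : shiftG F a = F) := by
    show shiftG F a⁻¹ = F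
    conv_lhs => rw [← ha, ← shiftG_mul, mul_inv_cancel, shiftG_one]

theorem mem_stabSubgroup {F : SimpleGraph (Option G)} {g : G} :
    g ∈ stabSubgroup F ↔ shiftG F g = F := Iff.rfl

theorem conj_mem_stabSubgroup_shiftG {F : SimpleGraph (Option G)} {x : G}
    (hx : x ∈ stabSubgroup F) (g : G) : g⁻¹ * x * g ∈ stabSubgroup (shiftG F g) := by
  rw [mem_stabSubgroup] at hx ⊢
  rw [← shiftG_mul, ← mul_assoc, ← mul_assoc, mul_inv_cancel, one_mul, shiftG_mul, hx]

end Shift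

namespace IsKFactorization

variable {V : Type*} {k : ℕ} {𝓕 : Set (SimpleGraph V)}

theorem eq_of_adj_s3 (hfac : IsKFactorization k 𝓕) {F F' : SimpleGraph V} (hF : F ∈ 𝓕)
    (hF' : F' ∈ 𝓕) {u v : V} (h : F.Adj u v) (h' : F'.Adj u v) : F = F' :=
  (hfac.2 u v h.ne).unique ⟨hF, h⟩ ⟨hF', h'⟩

theorem exists_adj (hfac : IsKFactorization k 𝓕) (hk : k ≠ 0) {F : SimpleGraph V} (hF : F ∈ 𝓕)
    (u : V) : ∃ v, F.Adj u v := by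
  have : (F.neighborSet u).Nonempty := Set.nonempty_of_ncard_ne_zero (hfac.1 F hF u ▸ hk)
  exact this

variable {G : Type*} [Group G] {𝓕 : Set (SimpleGraph (Option G))}

theorem mem_stabSubgroup_iff_adj (hfac : IsKFactorization k 𝓕) (hrot : IsRotational 𝓕)
    {F : SimpleGraph (Option G)} (hF : F ∈ 𝓕) (h1 : F.Adj none (some 1)) {a : G} :
    a ∈ stabSubgroup F ↔ F.Adj none (some a) := by
  constructor
  · intro (ha : shiftG F a = F)
    simpa [ha] using (shiftG_adj_map_mul F a).2 h1
  · intro h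
    have : shiftG F a⁻¹ = F :=
      hfac.eq_of_adj_s3 (hrot F hF a⁻¹) hF (by simpa using (shiftG_adj_map_mul F a⁻¹).2 h) h1
    simpa using (stabSubgroup F).inv_mem this

theorem card_stabSubgroup (hfac : IsKFactorization k 𝓕) (hrot : IsRotational 𝓕)
    {F : SimpleGraph (Option G)} (hF : F ∈ 𝓕) (h1 : F.Adj none (some 1)) :
    Nat.card (stabSubgroup F) = k := by
  have : F.neighborSet none = some '' (stabSubgroup F : Set G) := by
    ext (_ | a)
    · simp
    · simp [hfac.mem_stabSubgroup_iff_adj hrot hF h1]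
  rw [← hfac.1 F hF none, this, Set.ncard_image_of_injective _ (Option.some_injective G),
    ← Nat.card_coe_set_eq, SetLike.coe_sort_coe]

theorem exists_mem_stabSubgroup_of_orderOf_eq_two (hfac : IsKFactorization k 𝓕)
    (hrot : IsRotational 𝓕) {x : G} (hx : orderOf x = 2) :
    ∃ F ∈ 𝓕, x ∈ stabSubgroup F := by
  have hx1 : x ≠ 1 := by rintro rfl; simp at hx
  have hxx : x * x = 1 := by rw [← pow_two, ← hx, pow_orderOf_eq_one]
  obtain ⟨F, ⟨hF, hadj⟩, -⟩ := hfac.2 (some 1) (some x) (by simpa using hx1.symm)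
  refine ⟨F, hF, hfac.eq_of_adj_s3 (hrot F hF x) hF ?_ hadj⟩
  simpa [hxx] using ((shiftG_adj_map_mul F x).2 hadj).symm

theorem exists_conj_mem_stabSubgroup (hfac : IsKFactorization k 𝓕) (hrot : IsRotational 𝓕)
    (hk : k ≠ 0) {F₀ F : SimpleGraph (Option G)} (hF₀ : F₀ ∈ 𝓕) (h1 : F₀.Adj none (some 1))
    (hF : F ∈ 𝓕) {x : G} (hx : x ∈ stabSubgroup F) :
    ∃ g : G, g⁻¹ * x * g ∈ stabSubgroup F₀ := by
  obtain ⟨_ | a, ha⟩ := hfac.exists_adj hk hF none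
  · exact (F.irrefl ha).elim
  have : shiftG F a⁻¹ = F₀ :=
    hfac.eq_of_adj_s3 (hrot F hF a⁻¹) hF₀ (by simpa using (shiftG_adj_map_mul F a⁻¹).2 ha) h1
  exact ⟨a⁻¹, this ▸ conj_mem_stabSubgroup_shiftG hx a⁻¹⟩

end IsKFactorization

theorem stmt3_general {G : Type*} [Group G] (n m : ℕ) (hm : Odd m)
    (𝓕 : Set (SimpleGraph (Option G)))
    (hfac : IsKFactorization (2 ^ n * m) 𝓕) (hrot : IsRotational 𝓕) :
    {c : ConjClasses G | ∃ x : G, orderOf x = 2 ∧ ConjClasses.mk x = c}.ncard ≤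
      m * (2 ^ n - 1) := by
  have hk : 2 ^ n * m ≠ 0 := by positivity [hm.pos]
  obtain ⟨F₀, ⟨hF₀, h1⟩, -⟩ := hfac.2 none (some 1) (Option.some_ne_none 1).symm
  have hS : Nat.card (stabSubgroup F₀) = 2 ^ n * m := hfac.card_stabSubgroup hrot hF₀ h1
  have : Finite (stabSubgroup F₀) := Nat.finite_of_card_ne_zero (hS ▸ hk)
  have hsub : {c : ConjClasses G | ∃ x : G, orderOf x = 2 ∧ ConjClasses.mk x = c} ⊆
      (fun y : stabSubgroup F₀ => ConjClasses.mk (y : G)) '' {y | orderOf y = 2} := by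
    rintro _ ⟨x, hx, rfl⟩
    obtain ⟨F, hF, hxF⟩ := hfac.exists_mem_stabSubgroup_of_orderOf_eq_two hrot hx
    obtain ⟨g, hg⟩ := hfac.exists_conj_mem_stabSubgroup hrot hk hF₀ h1 hF hxF
    have hconj : SemiconjBy g⁻¹ x (g⁻¹ * x * g) := by simp [SemiconjBy, mul_assoc]
    refine ⟨⟨_, hg⟩, ?_, ?_⟩
    · show orderOf _ = 2
      rw [Subgroup.orderOf_mk, ← hconj.orderOf_eq, hx]
    · exact ConjClasses.mk_eq_mk_iff_isConj.2 (isConj_iff.2 ⟨g, by group⟩)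
  calc _ ≤ _ := Set.ncard_le_ncard hsub
    _ ≤ {y : stabSubgroup F₀ | orderOf y = 2}.ncard := Set.ncard_image_le
    _ ≤ m * (2 ^ n - 1) := ncard_orderOf_eq_prime_le hS (Nat.two_dvd_ne_zero.2 (Nat.odd_iff.1 hm))

theorem stmt3 {G : Type*} [Group G] [Fintype G] (n m : ℕ) (hn : 1 ≤ n) (hm : Odd m)
    (𝓕 : Set (SimpleGraph (Option G)))
    (hfac : IsKFactorization (2 ^ n * m) 𝓕) (hrot : IsRotational 𝓕) :
    {c : ConjClasses G | ∃ x : G, orderOf x = 2 ∧ ConjClasses.mk x = c}.ncard ≤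
      m * (2 ^ n - 1) :=
  stmt3_general n m hm 𝓕 hfac hrot
end

section
/- Let G be a finite group and F a subgraph of the complete graph on G ∪ {∞} which is a 2-starter under G, i.e., its G-stabilizer has order 2 and its difference list covers G ∖ {1}. Let n ≥ 1 and let H be the subgraph of the complete graph on (G × ℤ_n) ∪ {∞} with edges: [∞,(x,k)] for all x adjacent to ∞ in F and k ∈ ℤ_n; [(x,k),(x,r)] for all x adjacent to ∞ in F and k ≠ r in ℤ_n; and [(x,k),(y,r)] for all edges [x,y] of F with x,y ≠ ∞ and all k,r ∈ ℤ_n. Then H is a 2n-regular spanning subgraph of the complete graph on (G × ℤ_n) ∪ {∞}. -/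
open SimpleGraph

/-- The difference list of a graph on `G ∪ {∞}` covers every nonidentity element of `G`. -/
def DiffCovers {G : Type*} [Group G] (F : SimpleGraph (Option G)) : Prop :=
  ∀ d : G, d ≠ 1 → ∃ a b : G, F.Adj (some a) (some b) ∧ a * b⁻¹ = d

/-- A `k`-starter under `G`: a `k`-factor whose `G`-stabilizer has order `k` and whose
difference list covers `G ∖ {1}`. -/
def IsStarter {G : Type*} [Group G] (k : ℕ) (F : SimpleGraph (Option G)) : Prop :=
  IsKFactor k F ∧ (stabG F).ncard = k ∧ DiffCovers F

/-- The graph `H` on `(G × ℤ_n) ∪ {∞}` constructed from a `2`-factor `F` of the complete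
graph on `G ∪ {∞}`: join `∞` to `(x,k)` for `x ~ ∞` in `F`; join `(x,k)` to `(x,r)` for
`x ~ ∞` in `F` and `k ≠ r`; join `(x,k)` to `(y,r)` for every edge `[x,y]` of `F`
avoiding `∞`. -/
def Hgraph {G : Type*} [Group G] (F : SimpleGraph (Option G)) (n : ℕ) :
    SimpleGraph (Option (G × Multiplicative (ZMod n))) :=
  SimpleGraph.fromRel (fun u v =>
    (∃ (x : G) (k : Multiplicative (ZMod n)),
        F.Adj none (some x) ∧ u = none ∧ v = some (x, k)) ∨
    (∃ (x : G) (k r : Multiplicative (ZMod n)),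
        F.Adj none (some x) ∧ k ≠ r ∧ u = some (x, k) ∧ v = some (x, r)) ∨
    (∃ (x y : G) (k r : Multiplicative (ZMod n)),
        F.Adj (some x) (some y) ∧ u = some (x, k) ∧ v = some (y, r)))

lemma Hadj_none {G : Type*} [Group G] (F : SimpleGraph (Option G)) (n : ℕ)
    (w : Option (G × Multiplicative (ZMod n))) :
    (Hgraph F n).Adj none w ↔ ∃ x k, F.Adj none (some x) ∧ w = some (x, k) := by
  rw [Hgraph, fromRel_adj]
  constructor
  · rintro ⟨hne, (h | h | h) | (h | h | h)⟩ <;> aesop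
  · rintro ⟨x, k, hx, rfl⟩
    exact ⟨by simp, Or.inl (Or.inl ⟨x, k, hx, rfl, rfl⟩)⟩

lemma Hadj_some {G : Type*} [Group G] (F : SimpleGraph (Option G)) (n : ℕ)
    (x : G) (k : Multiplicative (ZMod n)) (w : Option (G × Multiplicative (ZMod n))) :
    (Hgraph F n).Adj (some (x, k)) w ↔
      (w = none ∧ F.Adj none (some x)) ∨
      (∃ r, r ≠ k ∧ F.Adj none (some x) ∧ w = some (x, r)) ∨
      (∃ y r, F.Adj (some x) (some y) ∧ w = some (y, r)) := by
  rw [Hgraph, fromRel_adj]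
  constructor
  · rintro ⟨hne, (h | h | h) | (h | h | h)⟩
    · obtain ⟨a, b, h1, h2, h3⟩ := h; exact absurd h2 (by simp)
    · obtain ⟨a, b, c, h1, h2, h3, h4⟩ := h
      simp only [Option.some.injEq, Prod.mk.injEq] at h3
      obtain ⟨rfl, rfl⟩ := h3
      exact Or.inr (Or.inl ⟨c, Ne.symm h2, h1, h4⟩)
    · obtain ⟨a, b, c, d, h1, h2, h3⟩ := h
      simp only [Option.some.injEq, Prod.mk.injEq] at h2
      obtain ⟨rfl, rfl⟩ := h2
      exact Or.inr (Or.inr ⟨b, d, h1, h3⟩)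
    · obtain ⟨a, b, h1, h2, h3⟩ := h
      exact Or.inl ⟨h2, by aesop⟩
    · obtain ⟨a, b, c, h1, h2, h3, h4⟩ := h
      simp only [Option.some.injEq, Prod.mk.injEq] at h4
      obtain ⟨rfl, rfl⟩ := h4
      exact Or.inr (Or.inl ⟨b, h2, h1, h3⟩)
    · obtain ⟨a, b, c, d, h1, h2, h3⟩ := h
      simp only [Option.some.injEq, Prod.mk.injEq] at h3
      obtain ⟨rfl, rfl⟩ := h3
      exact Or.inr (Or.inr ⟨a, c, h1.symm, h2⟩)
  · rintro (⟨rfl, hx⟩ | ⟨r, hr, hx, rfl⟩ | ⟨y, r, hxy, rfl⟩)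
    · exact ⟨by simp, Or.inr (Or.inl ⟨x, k, hx, rfl, rfl⟩)⟩
    · exact ⟨by simp [Ne.symm hr], Or.inl (Or.inr (Or.inl ⟨x, k, r, hx, fun h => hr h.symm, rfl, rfl⟩))⟩
    · refine ⟨?_, Or.inl (Or.inr (Or.inr ⟨x, y, k, r, hxy, rfl, rfl⟩))⟩
      simp only [ne_eq, Option.some.injEq, Prod.mk.injEq, not_and]
      rintro rfl; exact absurd hxy (F.irrefl)

lemma myncard_prod {α β : Type*} (s : Set α) (t : Set β) :
    (s ×ˢ t).ncard = s.ncard * t.ncard := by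
  rw [← Nat.card_coe_set_eq, ← Nat.card_coe_set_eq, ← Nat.card_coe_set_eq,
    Nat.card_congr (Equiv.Set.prod s t), Nat.card_prod]

theorem stmt9 {G : Type*} [Group G] [Fintype G] (n : ℕ) (hn : 1 ≤ n)
    (F : SimpleGraph (Option G)) (hF : IsStarter 2 F) :
    IsKFactor (2 * n) (Hgraph F n) := by
  have hreg : IsKFactor 2 F := hF.1
  haveI : NeZero n := ⟨by omega⟩
  have hnM : Nat.card (Multiplicative (ZMod n)) = n := by
    simp [Nat.card_eq_fintype_card, ZMod.card]
  intro v
  match v with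
  | none =>
    have hset : (Hgraph F n).neighborSet none =
        some '' ({x | F.Adj none (some x)} ×ˢ (Set.univ : Set (Multiplicative (ZMod n)))) := by
      ext w
      simp only [SimpleGraph.mem_neighborSet, Hadj_none, Set.mem_image, Set.mem_prod,
        Set.mem_setOf_eq, Set.mem_univ, and_true, Prod.exists]
      aesop
    have hS : ({x | F.Adj none (some x)} : Set G).ncard = 2 := by
      have h1 : F.neighborSet none = some '' {x | F.Adj none (some x)} := by
        ext a
        cases a <;> simp [SimpleGraph.mem_neighborSet]
      have := hreg none
      rw [h1, Set.ncard_image_of_injective _ (Option.some_injective _)] at this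
      exact this
    rw [hset, Set.ncard_image_of_injective _ (Option.some_injective _), myncard_prod,
      Set.ncard_univ, hnM, hS]
  | some (x, k) =>
    set S : Set G := {y | F.Adj (some x) (some y)} with hSdef
    have hxS : x ∉ S := fun h => F.irrefl h
    by_cases hx : F.Adj none (some x)
    · -- x adjacent to ∞
      have hS1 : S.ncard = 1 := by
        have h1 : F.neighborSet (some x) = insert none (some '' S) := by
          ext a
          cases a <;> simp [SimpleGraph.mem_neighborSet, hSdef, hx.symm]
        have h2 := hreg (some x)
        rw [h1, Set.ncard_insert_of_notMem (by simp) (Set.toFinite _),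
          Set.ncard_image_of_injective _ (Option.some_injective _)] at h2
        omega
      have hset : (Hgraph F n).neighborSet (some (x, k)) =
          insert none ((some '' (({x} : Set G) ×ˢ {r | r ≠ k})) ∪
            some '' (S ×ˢ (Set.univ : Set (Multiplicative (ZMod n))))) := by
        ext w
        simp only [SimpleGraph.mem_neighborSet, Hadj_some, Set.mem_insert_iff, Set.mem_union,
          Set.mem_image, Set.mem_prod, Set.mem_singleton_iff, Set.mem_setOf_eq, Set.mem_univ,
          and_true, Prod.exists, hSdef]
        constructor
        · rintro (⟨rfl, -⟩ | ⟨r, hr, -, rfl⟩ | ⟨y, r, hy, rfl⟩)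
          · exact Or.inl rfl
          · exact Or.inr (Or.inl ⟨x, r, ⟨rfl, hr⟩, rfl⟩)
          · exact Or.inr (Or.inr ⟨y, r, hy, rfl⟩)
        · rintro (rfl | ⟨a, b, ⟨rfl, hb⟩, rfl⟩ | ⟨a, b, ha, rfl⟩)
          · exact Or.inl ⟨rfl, hx⟩
          · exact Or.inr (Or.inl ⟨b, hb, hx, rfl⟩)
          · exact Or.inr (Or.inr ⟨a, b, ha, rfl⟩)
      have hck : ({r : Multiplicative (ZMod n) | r ≠ k}).ncard + 1 = n := by
        have : (Set.univ : Set (Multiplicative (ZMod n))) = insert k {r | r ≠ k} := by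
          ext r; by_cases hr : r = k <;> simp [hr]
        have h2 : (Set.univ : Set (Multiplicative (ZMod n))).ncard = n := by
          rw [Set.ncard_univ, hnM]
        rw [this, Set.ncard_insert_of_notMem (by simp) (Set.toFinite _)] at h2
        omega
      have hdisj : Disjoint ((some '' (({x} : Set G) ×ˢ {r | r ≠ k})))
          (some '' (S ×ˢ (Set.univ : Set (Multiplicative (ZMod n))))) := by
        rw [Set.disjoint_left]
        rintro w ⟨⟨a, b⟩, ⟨rfl, -⟩, rfl⟩ ⟨⟨c, d⟩, ⟨hc, -⟩, hw⟩
        simp only [Option.some.injEq, Prod.mk.injEq] at hw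
        obtain ⟨rfl, -⟩ := hw
        exact hxS hc
      rw [hset, Set.ncard_insert_of_notMem (by simp) (Set.toFinite _),
        Set.ncard_union_eq hdisj (Set.toFinite _) (Set.toFinite _),
        Set.ncard_image_of_injective _ (Option.some_injective _),
        Set.ncard_image_of_injective _ (Option.some_injective _),
        myncard_prod, myncard_prod, Set.ncard_univ, hnM, hS1, Set.ncard_singleton]
      omega
    · -- x not adjacent to ∞
      have hS2 : S.ncard = 2 := by
        have hx' : ¬F.Adj (some x) none := fun h => hx h.symm
        have h1 : F.neighborSet (some x) = some '' S := by
          ext a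
          cases a <;> simp [SimpleGraph.mem_neighborSet, hSdef, hx']
        have h2 := hreg (some x)
        rwa [h1, Set.ncard_image_of_injective _ (Option.some_injective _)] at h2
      have hset : (Hgraph F n).neighborSet (some (x, k)) =
          some '' (S ×ˢ (Set.univ : Set (Multiplicative (ZMod n)))) := by
        ext w
        simp only [SimpleGraph.mem_neighborSet, Hadj_some, Set.mem_image, Set.mem_prod,
          Set.mem_setOf_eq, Set.mem_univ, and_true, Prod.exists, hSdef]
        constructor
        · rintro (⟨-, h⟩ | ⟨r, -, h, -⟩ | ⟨y, r, hy, rfl⟩)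
          · exact absurd h hx
          · exact absurd h hx
          · exact ⟨y, r, hy, rfl⟩
        · rintro ⟨a, b, ha, rfl⟩
          exact Or.inr (Or.inr ⟨a, b, ha, rfl⟩)
      rw [hset, Set.ncard_image_of_injective _ (Option.some_injective _), myncard_prod,
        Set.ncard_univ, hnM, hS2]
end

section
/- With notation as in parenthesized context: if F is a 2-starter under G with G-stabilizer S = {1, s}, then the (G × ℤ_n)-stabilizer of the graph H constructed from F equals S × ℤ_n, a subgroup of order 2n. -/
/-! The projection `(x, k) ↦ x`, `∞ ↦ ∞` intertwines the actions of `G × ℤ_n` and `G`, and `H`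
is read off through it: two vertices of `H` are adjacent iff their projections are adjacent in `F`,
or they are distinct and project to the same neighbour of `∞`. Hence `(g, t)` preserves `H` iff
`g` preserves `F`, for every `t`, and the stabilizer of `H` is `S × ℤ_n`, of order `2n`. -/

open SimpleGraph

namespace SimpleGraph

variable {V : Type*}

theorem map_equiv_eq_self_iff (F : SimpleGraph V) (e : V ≃ V) :
    F.map e.toEmbedding = F ↔ ∀ a b, F.Adj (e a) (e b) ↔ F.Adj a b := by
  simp only [← comap_symm, SimpleGraph.ext_iff, funext_iff, comap_adj, Equiv.toEmbedding_apply,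
    eq_iff_iff]
  exact ⟨fun h a b => by simpa using (h (e a) (e b)).symm,
    fun h u v => by simpa using (h (e.symm u) (e.symm v)).symm⟩

end SimpleGraph

theorem mem_stabG_iff {G : Type*} [Group G] (F : SimpleGraph (Option G)) (g : G) :
    g ∈ stabG F ↔ ∀ a b : Option G,
      F.Adj (a.map (· * g)) (b.map (· * g)) ↔ F.Adj a b :=
  F.map_equiv_eq_self_iff _

section Hgraph

variable {G : Type*} [Group G] {n : ℕ} (F : SimpleGraph (Option G))

theorem hgraph_adj_iff (u v : Option (G × Multiplicative (ZMod n))) :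
    (Hgraph F n).Adj u v ↔ F.Adj (u.map Prod.fst) (v.map Prod.fst) ∨
      u ≠ v ∧ u.map Prod.fst = v.map Prod.fst ∧ F.Adj none (u.map Prod.fst) := by
  rw [Hgraph, fromRel_adj]
  rcases u with _ | ⟨x, k⟩ <;> rcases v with _ | ⟨y, r⟩
  · simp
  · simp
  · simp [F.adj_comm]
  · by_cases hxy : x = y
    · subst hxy
      simp +contextual [eq_comm]
    · simp [hxy, Ne.symm hxy, F.adj_comm (some y)]

theorem map_fst_map_mul {M : Type*} [Monoid M] (g : G) (t : M) (u : Option (G × M)) :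
    (u.map (· * (g, t))).map Prod.fst = (u.map Prod.fst).map (· * g) := by
  simp only [Option.map_map]
  rfl

theorem mk_mem_stabG_hgraph_iff (g : G) (t : Multiplicative (ZMod n)) :
    (g, t) ∈ stabG (Hgraph F n) ↔ g ∈ stabG F := by
  have hinj : Function.Injective (Option.map (· * g)) :=
    Option.map_injective (mul_left_injective g)
  rw [mem_stabG_iff, mem_stabG_iff]
  constructor
  · intro h a b
    by_cases hab : a = b
    · subst hab
      simp
    have hab' : a.map (· * g) ≠ b.map (· * g) := hinj.ne hab
    simpa [hgraph_adj_iff, Option.map_map, Function.comp_def, hab, hab'] using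
      h (a.map (·, 1)) (b.map (·, 1))
  · intro h u v
    have hnone (a : Option G) : F.Adj none (a.map (· * g)) ↔ F.Adj none a := h none a
    rw [hgraph_adj_iff, hgraph_adj_iff, map_fst_map_mul, map_fst_map_mul, h, hnone, hinj.eq_iff,
      (Option.map_injective (mul_left_injective (g, t))).ne_iff]

end Hgraph

theorem stmt10_general {G : Type*} [Group G] (n : ℕ)
    (F : SimpleGraph (Option G)) (hF : IsStarter 2 F) :
    stabG (Hgraph F n) = (stabG F) ×ˢ (Set.univ : Set (Multiplicative (ZMod n))) ∧
    (stabG (Hgraph F n)).ncard = 2 * n := by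
  have hstab : stabG (Hgraph F n) = stabG F ×ˢ Set.univ := by
    ext ⟨g, t⟩
    simp [mk_mem_stabG_hgraph_iff]
  refine ⟨hstab, ?_⟩
  rw [hstab, Set.ncard_prod, hF.2.1, Set.ncard_univ, Nat.card_congr Multiplicative.toAdd,
    Nat.card_zmod]

theorem stmt10 {G : Type*} [Group G] [Fintype G] (n : ℕ) (hn : 1 ≤ n)
    (F : SimpleGraph (Option G)) (hF : IsStarter 2 F) :
    stabG (Hgraph F n) = (stabG F) ×ˢ (Set.univ : Set (Multiplicative (ZMod n))) ∧
    (stabG (Hgraph F n)).ncard = 2 * n :=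
  stmt10_general n F hF
end

section
/- With notation as in context: if F is a 2-starter under G, then the difference list of the constructed graph H covers every nonidentity element of G × ℤ_n. -/
open SimpleGraph

/-
A difference `(g, z)` with `g ≠ 1` comes from an edge `[a, b]` of `F` with `a b⁻¹ = g`, lifted to
the edge `[(a, z), (b, 1)]` of `H`; a difference `(1, z)` with `z ≠ 1` comes from the edge
`[(x, z), (x, 1)]` of `H` over a neighbour `x` of `∞`, which exists since `F` is a `2`-factor.
-/

theorem IsKFactor.exists_adj_none {α : Type*} {k : ℕ} {F : SimpleGraph (Option α)}
    (hF : IsKFactor k F) (hk : k ≠ 0) : ∃ x : α, F.Adj none (some x) := by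
  obtain ⟨v, hv⟩ : (F.neighborSet none).Nonempty :=
    Set.nonempty_of_ncard_ne_zero (by rw [hF none]; exact hk)
  cases v with
  | none => exact absurd hv (F.loopless.irrefl none)
  | some x => exact ⟨x, hv⟩

section Hgraph

variable {G : Type*} [Group G] {F : SimpleGraph (Option G)} {n : ℕ}

theorem Hgraph_adj_of_adj_none {x : G} {k r : Multiplicative (ZMod n)}
    (hx : F.Adj none (some x)) (hkr : k ≠ r) :
    (Hgraph F n).Adj (some (x, k)) (some (x, r)) := by
  refine (fromRel_adj _ _ _).mpr ⟨?_, Or.inl (Or.inr (Or.inl ⟨x, k, r, hx, hkr, rfl, rfl⟩))⟩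
  simpa using hkr

theorem Hgraph_adj_of_adj {x y : G} (k r : Multiplicative (ZMod n))
    (hxy : F.Adj (some x) (some y)) :
    (Hgraph F n).Adj (some (x, k)) (some (y, r)) := by
  refine (fromRel_adj _ _ _).mpr ⟨?_, Or.inl (Or.inr (Or.inr ⟨x, y, k, r, hxy, rfl, rfl⟩))⟩
  simp only [ne_eq, Option.some.injEq, Prod.mk.injEq, not_and]
  rintro rfl
  exact absurd hxy (F.loopless.irrefl _)

theorem diffCovers_Hgraph (hF : DiffCovers F) {x : G} (hx : F.Adj none (some x)) :
    DiffCovers (Hgraph F n) := by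
  rintro ⟨g, z⟩ hgz
  by_cases hg : g = 1
  · subst hg
    have hz : z ≠ 1 := fun hz => hgz (by rw [hz, Prod.mk_one_one])
    exact ⟨(x, z), (x, 1), Hgraph_adj_of_adj_none hx hz, by simp⟩
  · obtain ⟨a, b, hab, rfl⟩ := hF g hg
    exact ⟨(a, z), (b, 1), Hgraph_adj_of_adj z 1 hab, by simp⟩

end Hgraph

theorem stmt11_general {G : Type*} [Group G] (n : ℕ)
    (F : SimpleGraph (Option G)) (hF : IsStarter 2 F) :
    DiffCovers (Hgraph F n) := by
  obtain ⟨hfactor, -, hcovers⟩ := hF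
  obtain ⟨x, hx⟩ := hfactor.exists_adj_none two_ne_zero
  exact diffCovers_Hgraph hcovers hx

theorem stmt11 {G : Type*} [Group G] [Fintype G] (n : ℕ) (hn : 1 ≤ n)
    (F : SimpleGraph (Option G)) (hF : IsStarter 2 F) :
    DiffCovers (Hgraph F n) :=
  stmt11_general n F hF
end

section
/- If there exists a 2-starter under a finite group G, then there exists a 2n-starter under G × ℤ_n for every n ≥ 1. -/
open SimpleGraph

/-!
Blow every point `x` of `G` up into the fibre `{x} × ℤ_n`. In `Hgraph F n` whole fibres are
joined along the edges of `F` avoiding `∞`, and a fibre over a neighbour of `∞` is joined to `∞`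
and made a clique. A vertex over `v` then has degree `deg_F v * n`: for `v` adjacent to `∞`, the
`1 + (n - 1)` neighbours coming from `∞` and the clique make up for the `n` copies of `∞`. The
construction commutes with right multiplication and `F` can be read off `Hgraph F n`, so the
stabilizer of `Hgraph F n` is `stabG F × ℤ_n`. Its differences are `(d, m)` for every difference
`d` of `F`, and `(1, m)` from the cliques.
-/

open Classical in
lemma Set.ncard_eq_ncard_preimage_some_add {α : Type*} (s : Set (Option α))
    (hs : s.Finite := by toFinite_tac) :
    s.ncard = (some ⁻¹' s).ncard + if none ∈ s then 1 else 0 := by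
  have hsome : (some '' (some ⁻¹' s)).ncard = (some ⁻¹' s).ncard :=
    Set.ncard_image_of_injective _ (Option.some_injective α)
  split_ifs with h
  · have hs' : s = insert none (some '' (some ⁻¹' s)) := by
      ext (_ | x) <;> simp [h]
    conv_lhs => rw [hs']
    rw [Set.ncard_insert_of_notMem (by simp) (hs.subset (by simp)), hsome]
  · have hs' : s = some '' (some ⁻¹' s) := by
      ext (_ | x) <;> simp [h]
    rw [← hsome, ← hs', add_zero]

lemma Nat.card_multiplicative_zmod (n : ℕ) : Nat.card (Multiplicative (ZMod n)) = n :=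
  (Nat.card_congr Multiplicative.toAdd).trans (Nat.card_zmod n)

lemma IsKFactor.exists_adj_none_some {α : Type*} {F : SimpleGraph (Option α)} {k : ℕ}
    (hF : IsKFactor k F) (hk : k ≠ 0) : ∃ x, F.Adj none (some x) := by
  obtain ⟨_ | x, hx⟩ := Set.nonempty_of_ncard_ne_zero (hF none ▸ hk)
  · exact absurd hx F.irrefl
  · exact ⟨x, hx⟩

lemma shiftG_adj {G : Type*} [Group G] (F : SimpleGraph (Option G)) (g : G) (u v : Option G) :
    (shiftG F g).Adj u v ↔ F.Adj (u.map (· * g⁻¹)) (v.map (· * g⁻¹)) := by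
  rw [shiftG, ← Equiv.symm_symm (Equiv.optionCongr _), SimpleGraph.map_symm]
  rfl

section Hgraph

variable {G : Type*} [Group G] {n : ℕ}

section Adj

variable (F : SimpleGraph (Option G)) (n)

@[simp]
lemma Hgraph_adj_none_some (p : G × Multiplicative (ZMod n)) :
    (Hgraph F n).Adj none (some p) ↔ F.Adj none (some p.1) := by
  simp only [Hgraph, SimpleGraph.fromRel_adj]
  aesop

@[simp]
lemma Hgraph_adj_some_none (p : G × Multiplicative (ZMod n)) :
    (Hgraph F n).Adj (some p) none ↔ F.Adj (some p.1) none := by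
  rw [SimpleGraph.adj_comm, Hgraph_adj_none_some, SimpleGraph.adj_comm]

@[simp]
lemma Hgraph_adj_some_some (p q : G × Multiplicative (ZMod n)) :
    (Hgraph F n).Adj (some p) (some q) ↔
      (p.1 = q.1 ∧ p.2 ≠ q.2 ∧ F.Adj none (some p.1)) ∨ F.Adj (some p.1) (some q.1) := by
  obtain ⟨a, k⟩ := p
  obtain ⟨b, r⟩ := q
  have hsymm : F.Adj (some b) (some a) → F.Adj (some a) (some b) := F.adj_symm
  have hirr : ¬ F.Adj (some a) (some a) := F.irrefl
  simp only [Hgraph, SimpleGraph.fromRel_adj]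
  aesop

end Adj

lemma shiftG_Hgraph (F : SimpleGraph (Option G)) (g : G) (m : Multiplicative (ZMod n)) :
    shiftG (Hgraph F n) (g, m) = Hgraph (shiftG F g) n := by
  ext (_ | ⟨a, k⟩) (_ | ⟨b, r⟩) <;> simp [shiftG_adj]

lemma Hgraph_injective : Function.Injective (Hgraph (G := G) · n) := by
  intro F F' h
  have hadj : ∀ u v, (Hgraph F n).Adj u v ↔ (Hgraph F' n).Adj u v := by simp [h]
  ext (_ | a) (_ | b)
  · simp
  · simpa using hadj none (some (b, 1))
  · simpa using hadj (some (a, 1)) none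
  · simpa using hadj (some (a, 1)) (some (b, 1))

lemma stabG_Hgraph (F : SimpleGraph (Option G)) :
    stabG (Hgraph F n) = stabG F ×ˢ Set.univ := by
  ext ⟨g, m⟩
  simp [stabG, shiftG_Hgraph, Hgraph_injective.eq_iff]

lemma ncard_stabG_Hgraph (F : SimpleGraph (Option G)) :
    (stabG (Hgraph F n)).ncard = (stabG F).ncard * n := by
  rw [stabG_Hgraph, Set.ncard_prod, Set.ncard_univ, Nat.card_multiplicative_zmod]

section Degree

variable [Finite G] [NeZero n] (F : SimpleGraph (Option G))

lemma ncard_neighborSet_Hgraph_none :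
    ((Hgraph F n).neighborSet none).ncard = (F.neighborSet none).ncard * n := by
  have hpre : some ⁻¹' (Hgraph F n).neighborSet none =
      (some ⁻¹' F.neighborSet none) ×ˢ Set.univ := by
    ext; simp
  rw [Set.ncard_eq_ncard_preimage_some_add,
    Set.ncard_eq_ncard_preimage_some_add (F.neighborSet none), hpre, Set.ncard_prod,
    Set.ncard_univ, Nat.card_multiplicative_zmod]
  simp

lemma ncard_neighborSet_Hgraph_some (a : G) (k : Multiplicative (ZMod n)) :
    ((Hgraph F n).neighborSet (some (a, k))).ncard = (F.neighborSet (some a)).ncard * n := by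
  have hcard_univ : (Set.univ : Set (Multiplicative (ZMod n))).ncard = n := by
    rw [Set.ncard_univ, Nat.card_multiplicative_zmod]
  rw [Set.ncard_eq_ncard_preimage_some_add,
    Set.ncard_eq_ncard_preimage_some_add (F.neighborSet _)]
  by_cases ha : F.Adj (some a) none
  · have hpre : some ⁻¹' (Hgraph F n).neighborSet (some (a, k)) =
        {a} ×ˢ {k}ᶜ ∪ (some ⁻¹' F.neighborSet (some a)) ×ˢ Set.univ := by
      ext ⟨b, r⟩
      simp [F.adj_comm none, ha, eq_comm (a := a), eq_comm (a := k)]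
    have hdisj : Disjoint ({a} ×ˢ {k}ᶜ) ((some ⁻¹' F.neighborSet (some a)) ×ˢ Set.univ) :=
      Set.disjoint_prod.mpr (Or.inl (by simp))
    have hcompl : ({k}ᶜ : Set (Multiplicative (ZMod n))).ncard = n - 1 := by
      rw [Set.ncard_compl, Set.ncard_singleton, Nat.card_multiplicative_zmod]
    rw [hpre, Set.ncard_union_eq hdisj, Set.ncard_prod, Set.ncard_prod, hcompl, hcard_univ]
    simp only [Set.ncard_singleton, SimpleGraph.mem_neighborSet, ha, Hgraph_adj_some_none,
      if_true]
    zify [NeZero.one_le (n := n)]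
    ring
  · have hpre : some ⁻¹' (Hgraph F n).neighborSet (some (a, k)) =
        (some ⁻¹' F.neighborSet (some a)) ×ˢ Set.univ := by
      ext ⟨b, r⟩
      simp [F.adj_comm none, ha]
    rw [hpre, Set.ncard_prod, hcard_univ]
    simp [ha]

end Degree

lemma IsKFactor.Hgraph [Finite G] [NeZero n] {F : SimpleGraph (Option G)} {k : ℕ}
    (hF : IsKFactor k F) : IsKFactor (k * n) (Hgraph F n) := by
  rintro (_ | ⟨a, r⟩)
  · rw [ncard_neighborSet_Hgraph_none, hF]
  · rw [ncard_neighborSet_Hgraph_some, hF]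

lemma DiffCovers.Hgraph {F : SimpleGraph (Option G)} (hF : DiffCovers F) {x : G}
    (hx : F.Adj none (some x)) : DiffCovers (Hgraph F n) := by
  rintro ⟨g, m⟩ hd
  by_cases hg : g = 1
  · subst hg
    have hm : m ≠ 1 := fun hm => hd (by rw [hm, Prod.mk_one_one])
    exact ⟨(x, m), (x, 1), by simp [hm, hx], by simp⟩
  · obtain ⟨a, b, hab, rfl⟩ := hF g hg
    exact ⟨(a, m), (b, 1), by simp [hab], by simp⟩

end Hgraph

theorem stmt12 {G : Type*} [Group G] [Fintype G]
    (hex : ∃ F : SimpleGraph (Option G), IsStarter 2 F) (n : ℕ) (hn : 1 ≤ n) :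
    ∃ H : SimpleGraph (Option (G × Multiplicative (ZMod n))), IsStarter (2 * n) H := by
  obtain ⟨F, hdeg, hstab, hdiff⟩ := hex
  have : NeZero n := ⟨by omega⟩
  obtain ⟨x, hx⟩ := hdeg.exists_adj_none_some two_ne_zero
  exact ⟨Hgraph F n, hdeg.Hgraph, by rw [ncard_stabG_Hgraph, hstab], hdiff.Hgraph hx⟩
end

section
/- Let p be a prime, a ≥ 3, and V = {(a_j, k), (b_j, k) : k ∈ ℤ_p} ∪ {∞} a set of 2p+1 vertices arranged via the Walecki construction: for i ∈ ℤ_p let E_i be the (2p+1)-cycle obtained by rotating the base cycle E_0 = ((a,0),(b,0),(b,p−1),(a,1),(a,p−1),(b,1),…,(a,(p−1)/2+1),(b,(p−1)/2),∞) counterclockwise i steps on the 2p non-infinity vertices. Then the cycles E_0, …, E_{p−1} are pairwise edge-disjoint and their edges partition the edge set of the complete graph on V. -/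
def wpos (p j : ℕ) : ZMod (2 * p) :=
  if Even j then -((j / 2 : ℕ) : ZMod (2 * p)) else (((j + 1) / 2 : ℕ) : ZMod (2 * p))

def walecki (p : ℕ) (i : ℕ) : SimpleGraph (Option (ZMod (2 * p))) :=
  SimpleGraph.fromRel (fun u v =>
    (∃ j : ℕ, j + 1 < 2 * p ∧ u = some (wpos p j + (i : ZMod (2 * p))) ∧
        v = some (wpos p (j + 1) + (i : ZMod (2 * p)))) ∨
    (u = none ∧ (v = some ((i : ZMod (2 * p))) ∨
        v = some ((p : ZMod (2 * p)) + (i : ZMod (2 * p))))))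

namespace WaleckiAux

lemma cast_nat_inj {m : ℕ} {a b : ℕ} (ha : a < m) (hb : b < m)
    (h : (a : ZMod m) = b) : a = b := by
  have := (ZMod.natCast_eq_natCast_iff' a b m).mp h
  rwa [Nat.mod_eq_of_lt ha, Nat.mod_eq_of_lt hb] at this

lemma wpos_even (p k : ℕ) : wpos p (2*k) = -(k : ZMod (2*p)) := by
  simp [wpos, even_two_mul, Nat.mul_div_cancel_left]

lemma wpos_odd (p k : ℕ) : wpos p (2*k+1) = ((k+1 : ℕ) : ZMod (2*p)) := by
  have h : ¬ Even (2*k+1) := by simp [Nat.even_add_one, parity_simps]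
  have h2 : (2*k+1+1)/2 = k+1 := by omega
  rw [wpos, if_neg h, h2]

lemma wpos_add (p j : ℕ) : wpos p j + wpos p (j+1) = if Even j then 1 else 0 := by
  rcases Nat.even_or_odd j with hj | hj
  · obtain ⟨k, hk⟩ := hj
    have hj2 : j = 2*k := by omega
    subst hj2
    rw [wpos_even, wpos_odd, if_pos (even_two_mul k)]
    push_cast; ring
  · obtain ⟨k, hk⟩ := hj
    subst hk
    have h2 : 2*k+1+1 = 2*(k+1) := by ring
    rw [wpos_odd, h2, wpos_even, if_neg (by simp [Nat.even_add_one, parity_simps])]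
    push_cast; ring

-- the "sum 1" edges: {-k, k+1} for k < p
lemma helper1 {p : ℕ} (i : ℕ) {k : ℕ} (hk : k < p) :
    (walecki p i).Adj (some (-(k : ZMod (2*p)) + i)) (some ((k : ZMod (2*p)) + 1 + i)) := by
  rw [walecki, SimpleGraph.fromRel_adj]
  refine ⟨?_, Or.inl (Or.inl ⟨2*k, by omega, by rw [wpos_even], by rw [wpos_odd]; push_cast; ring_nf⟩)⟩
  intro h
  have h2 : ((2*k+1 : ℕ) : ZMod (2*p)) = 0 := by
    have := Option.some_injective _ h
    push_cast
    linear_combination -this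
  have := (ZMod.natCast_eq_zero_iff _ _).mp h2
  have := Nat.le_of_dvd (by omega) this
  omega

-- the "sum 0" edges: {k, -k} for 0 < k < p
lemma helper2 {p : ℕ} (i : ℕ) {k : ℕ} (hk0 : 0 < k) (hk : k < p) :
    (walecki p i).Adj (some ((k : ZMod (2*p)) + i)) (some (-(k : ZMod (2*p)) + i)) := by
  rw [walecki, SimpleGraph.fromRel_adj]
  have e1 : k - 1 + 1 = k := by omega
  have e2 : 2*(k-1)+1+1 = 2*k := by omega
  refine ⟨?_, Or.inl (Or.inl ⟨2*(k-1)+1, by omega, by rw [wpos_odd, e1], by rw [e2, wpos_even]⟩)⟩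
  intro h
  have h2 : ((2*k : ℕ) : ZMod (2*p)) = 0 := by
    have := Option.some_injective _ h
    push_cast
    linear_combination this
  have := (ZMod.natCast_eq_zero_iff _ _).mp h2
  have := Nat.le_of_dvd (by omega) this
  omega

lemma adj_none1 {p : ℕ} (i : ℕ) : (walecki p i).Adj none (some ((i : ZMod (2*p)))) := by
  rw [walecki, SimpleGraph.fromRel_adj]
  exact ⟨by simp, Or.inl (Or.inr ⟨rfl, Or.inl rfl⟩)⟩

lemma adj_none2 {p : ℕ} (i : ℕ) :
    (walecki p i).Adj none (some ((p : ZMod (2*p)) + i)) := by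
  rw [walecki, SimpleGraph.fromRel_adj]
  exact ⟨by simp, Or.inl (Or.inr ⟨rfl, Or.inr rfl⟩)⟩

lemma adj_none_elim {p : ℕ} {i : ℕ} {y : ZMod (2*p)}
    (h : (walecki p i).Adj none (some y)) :
    y = (i : ZMod (2*p)) ∨ y = (p : ZMod (2*p)) + i := by
  rw [walecki, SimpleGraph.fromRel_adj] at h
  obtain ⟨-, h | h⟩ := h
  · rcases h with ⟨j, -, hu, -⟩ | ⟨-, h⟩
    · exact absurd hu (by simp)
    · rcases h with h | h <;> [left; right] <;> exact Option.some_injective _ h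
  · rcases h with ⟨j, -, -, hv⟩ | ⟨h, -⟩
    · exact absurd hv (by simp)
    · exact absurd h (by simp)

lemma adj_some_elim {p : ℕ} {i : ℕ} {x y : ZMod (2*p)}
    (h : (walecki p i).Adj (some x) (some y)) :
    x + y = 2*(i : ZMod (2*p)) ∨ x + y = 2*(i : ZMod (2*p)) + 1 := by
  rw [walecki, SimpleGraph.fromRel_adj] at h
  obtain ⟨-, h | h⟩ := h <;>
  · rcases h with ⟨j, -, hu, hv⟩ | ⟨h, -⟩
    · have hu := Option.some_injective _ hu
      have hv := Option.some_injective _ hv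
      have hs := wpos_add p j
      split_ifs at hs with hj
      · right; rw [hu, hv]; linear_combination hs
      · left; rw [hu, hv]; linear_combination hs
    · exact absurd h (by simp)

lemma adj_of_sum_odd {p : ℕ} (hp : 0 < p) (i : ℕ) {x y : ZMod (2*p)}
    (h : x + y = 2*(i : ZMod (2*p)) + 1) : (walecki p i).Adj (some x) (some y) := by
  haveI : NeZero (2*p) := ⟨by omega⟩
  set n := (x - i).val with hn
  have hx : x = (n : ZMod (2*p)) + i := by
    rw [hn]; simp [ZMod.natCast_val, ZMod.cast_id]
  have hnlt : n < 2*p := ZMod.val_lt _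
  rcases lt_or_ge p n with hcase | hcase
  · -- n > p : x = -(2p - n), use helper1 with k = 2p - n
    set k := 2*p - n with hkdef
    have hk : k < p := by omega
    have hxk : (n : ZMod (2*p)) = -(k : ZMod (2*p)) := by
      have : (n : ℕ) = 2*p - k := by omega
      rw [this, Nat.cast_sub (by omega)]
      simp
    have hy : y = (k : ZMod (2*p)) + 1 + i := by
      linear_combination h - hx - hxk
    rw [hx, hxk, hy]
    exact helper1 i hk
  · rcases Nat.eq_zero_or_pos n with h0 | h0
    · -- n = 0 : x = i, y = 1 + i, use helper1 with k = 0
      have hy : y = (0 : ZMod (2*p)) + 1 + i := by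
        rw [h0] at hx; push_cast at hx ⊢; linear_combination h - hx
      have hx' : x = -(0 : ZMod (2*p)) + i := by
        rw [h0] at hx; push_cast at hx ⊢; linear_combination hx
      rw [hx', hy]
      exact_mod_cast helper1 (k := 0) i hp
    · -- 1 ≤ n ≤ p : x = (n-1)+1, y = -(n-1), use helper1 with k = n-1, swapped
      set k := n - 1 with hkdef
      have hk : k < p := by omega
      have hxk : (n : ZMod (2*p)) = (k : ZMod (2*p)) + 1 := by
        have : (n : ℕ) = k + 1 := by omega
        rw [this]; push_cast; ring
      have hy : y = -(k : ZMod (2*p)) + i := by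
        linear_combination h - hx - hxk
      rw [hx, hxk, hy]
      exact (helper1 i hk).symm

lemma adj_of_sum_even {p : ℕ} (hp : 0 < p) (i : ℕ) {x y : ZMod (2*p)} (hxy : x ≠ y)
    (h : x + y = 2*(i : ZMod (2*p))) : (walecki p i).Adj (some x) (some y) := by
  haveI : NeZero (2*p) := ⟨by omega⟩
  set n := (x - i).val with hn
  have hx : x = (n : ZMod (2*p)) + i := by
    rw [hn]; simp [ZMod.natCast_val, ZMod.cast_id]
  have hnlt : n < 2*p := ZMod.val_lt _
  have hy : y = -(n : ZMod (2*p)) + i := by linear_combination h - hx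
  have hpp : ((p : ℕ) : ZMod (2*p)) + ((p : ℕ) : ZMod (2*p)) = 0 := by
    have : ((2*p : ℕ) : ZMod (2*p)) = 0 := ZMod.natCast_self _
    push_cast at this; linear_combination this
  have hn0 : n ≠ 0 := by
    intro h0
    apply hxy
    rw [hx, hy, h0]; push_cast; ring
  have hnp : n ≠ p := by
    intro h0
    apply hxy
    rw [hx, hy, h0]
    linear_combination hpp
  rcases lt_or_ge n p with hcase | hcase
  · rw [hx, hy]
    exact helper2 i (by omega) hcase
  · set k := 2*p - n with hkdef
    have hxk : (n : ZMod (2*p)) = -(k : ZMod (2*p)) := by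
      have : (n : ℕ) = 2*p - k := by omega
      rw [this, Nat.cast_sub (by omega)]
      simp
    have : y = (k : ZMod (2*p)) + i := by rw [hy, hxk]; ring
    rw [hx, hxk, this]
    exact (helper2 i (by omega) (by omega)).symm

end WaleckiAux

open WaleckiAux in
theorem stmt15 (p : ℕ) (hp : p.Prime) :
    (∀ i j : ℕ, i < j → j < p → ∀ u v : Option (ZMod (2 * p)),
        ¬((walecki p i).Adj u v ∧ (walecki p j).Adj u v)) ∧
    (∀ u v : Option (ZMod (2 * p)), u ≠ v → ∃ i < p, (walecki p i).Adj u v) := by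
  have hp1 : 0 < p := hp.pos
  haveI : NeZero (2*p) := ⟨by omega⟩
  have key : ∀ a b : ℕ, a < 2*p → b < 2*p → ((a : ℕ) : ZMod (2*p)) = b → a = b :=
    fun a b ha hb h => cast_nat_inj ha hb h
  constructor
  · -- pairwise edge-disjoint
    have main : ∀ i j : ℕ, i < j → j < p → ∀ y : ZMod (2*p),
        ¬((walecki p i).Adj none (some y) ∧ (walecki p j).Adj none (some y)) := by
      rintro i j hij hjp y ⟨h1, h2⟩
      have e1 := adj_none_elim h1
      have e2 := adj_none_elim h2
      rcases e1 with e1 | e1 <;> rcases e2 with e2 | e2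
      · have := key i j (by omega) (by omega) (by rw [← e1, ← e2])
        omega
      · have := key i (p + j) (by omega) (by omega)
          (by push_cast; rw [← e1, e2])
        omega
      · have := key (p + i) j (by omega) (by omega)
          (by push_cast; rw [← e2, e1])
        omega
      · have := key (p + i) (p + j) (by omega) (by omega)
          (by push_cast; rw [← e1, ← e2])
        omega
    rintro i j hij hjp u v ⟨h1, h2⟩
    match u, v with
    | none, none => exact h1.ne rfl
    | none, some y => exact main i j hij hjp y ⟨h1, h2⟩
    | some x, none => exact main i j hij hjp x ⟨h1.symm, h2.symm⟩
    | some x, some y =>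
      have e1 := adj_some_elim h1
      have e2 := adj_some_elim h2
      rcases e1 with e1 | e1 <;> rcases e2 with e2 | e2
      · have := key (2*i) (2*j) (by omega) (by omega)
          (by push_cast; linear_combination e2 - e1)
        omega
      · have := key (2*i) (2*j+1) (by omega) (by omega)
          (by push_cast; linear_combination e2 - e1)
        omega
      · have := key (2*i+1) (2*j) (by omega) (by omega)
          (by push_cast; linear_combination e2 - e1)
        omega
      · have := key (2*i+1) (2*j+1) (by omega) (by omega)
          (by push_cast; linear_combination e2 - e1)
        omega
  · -- covering
    have aux : ∀ y : ZMod (2*p), ∃ i < p, (walecki p i).Adj none (some y) := by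
      intro y
      set n := y.val with hndef
      have hy : y = (n : ZMod (2*p)) := by
        rw [hndef]; simp [ZMod.natCast_val, ZMod.cast_id]
      have hlt : n < 2*p := ZMod.val_lt _
      rcases lt_or_ge n p with hc | hc
      · refine ⟨n, hc, ?_⟩
        rw [hy]
        exact adj_none1 _
      · refine ⟨n - p, by omega, ?_⟩
        have hsplit : ((p : ℕ) : ZMod (2*p)) + ((n - p : ℕ) : ZMod (2*p)) = (n : ZMod (2*p)) := by
          rw [Nat.cast_sub hc]; ring
        rw [hy, ← hsplit]
        exact adj_none2 _
    rintro u v huv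
    match u, v with
    | none, none => exact absurd rfl huv
    | none, some y => exact aux y
    | some x, none =>
      obtain ⟨i, hi, h⟩ := aux x
      exact ⟨i, hi, h.symm⟩
    | some x, some y =>
      have hxy : x ≠ y := fun h => huv (by rw [h])
      set s := (x+y).val with hsdef
      have hs : x + y = (s : ZMod (2*p)) := by
        rw [hsdef]; simp [ZMod.natCast_val, ZMod.cast_id]
      have hlt : s < 2*p := ZMod.val_lt _
      rcases Nat.even_or_odd s with hc | hc
      · obtain ⟨k, hk⟩ := hc
        have e : s/2 = k := by omega
        refine ⟨s/2, by omega, adj_of_sum_even hp1 _ hxy ?_⟩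
        rw [e, hs, hk]; push_cast; ring
      · obtain ⟨k, hk⟩ := hc
        have e : s/2 = k := by omega
        refine ⟨s/2, by omega, adj_of_sum_odd hp1 _ ?_⟩
        rw [e, hs, hk]; push_cast; ring
end

section
/- Let p be an odd prime, a_q ≥ 3, and r the residue of a_q mod p with gcd(r−1, p) = 1. For j ∈ ℤ_p define F_j as the union over k ∈ ℤ_p of the cycles ((x_1,k),(x_2,j+k),(x_3,2j+k),…,(x_{a_q},(r−1)j+k)) on vertex set {x_1,…,x_{a_q}} × ℤ_p (second coordinates mod p). Then for i ≠ j in ℤ_p, F_i and F_j are edge-disjoint. -/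
/-- The `2`-factor `F_j` on `{x_1, …, x_a} × ℤ_p` (with `x_t` encoded as `t - 1 : Fin a`):
the union over `k ∈ ℤ_p` of the cycles
`((x_1,k),(x_2,j+k),(x_3,2j+k),…,(x_a,(r-1)j+k))`, where `r ≡ a (mod p)`. -/
def Fgraph (a p : ℕ) (ha : 0 < a) (j : ZMod p) : SimpleGraph (Fin a × ZMod p) :=
  SimpleGraph.fromRel (fun u v => ∃ k : ZMod p,
    (∃ (t : ℕ) (h : t + 1 < a),
      u = (⟨t, by omega⟩, (t : ZMod p) * j + k) ∧
      v = (⟨t + 1, h⟩, ((t : ZMod p) + 1) * j + k)) ∨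
    (u = (⟨a - 1, by omega⟩, ((a : ZMod p) - 1) * j + k) ∧ v = (⟨0, ha⟩, k)))

theorem stmt16 (p a : ℕ) (hp : p.Prime) (hodd : Odd p) (ha : 3 ≤ a)
    (hr : (a : ZMod p) ≠ 1) :
    ∀ i j : ZMod p, i ≠ j → ∀ u v : Fin a × ZMod p,
      ¬((Fgraph a p (by omega) i).Adj u v ∧ (Fgraph a p (by omega) j).Adj u v) := by
  haveI := Fact.mk hp
  intro i j hij u v ⟨h1, h2⟩
  rw [Fgraph, SimpleGraph.fromRel_adj] at h1 h2
  have hsub : ((a : ZMod p) - 1) ≠ 0 := sub_ne_zero.mpr hr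
  obtain ⟨-, h1⟩ := h1
  obtain ⟨-, h2⟩ := h2
  rcases h1 with ⟨k1, ⟨t1, ht1, hu1, hv1⟩ | ⟨hu1, hv1⟩⟩ | ⟨k1, ⟨t1, ht1, hv1, hu1⟩ | ⟨hv1, hu1⟩⟩ <;>
  rcases h2 with ⟨k2, ⟨t2, ht2, hu2, hv2⟩ | ⟨hu2, hv2⟩⟩ | ⟨k2, ⟨t2, ht2, hv2, hu2⟩ | ⟨hv2, hu2⟩⟩ <;>
  subst hu1 <;> subst hv1 <;>
  simp only [Prod.mk.injEq, Fin.mk.injEq] at hu2 hv2 <;>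
  obtain ⟨hf1, hs1⟩ := hu2 <;> obtain ⟨hf2, hs2⟩ := hv2 <;>
  first
  | omega
  | (subst hf1; exact hij (by linear_combination hs2 - hs1))
  | (subst hf1; exact hij (by linear_combination hs1 - hs2))
  | (subst hf2; exact hij (by linear_combination hs2 - hs1))
  | (subst hf2; exact hij (by linear_combination hs1 - hs2))
  | exact hij (mul_left_cancel₀ hsub (by linear_combination hs1 - hs2))
  | exact hij (mul_left_cancel₀ hsub (by linear_combination hs2 - hs1))
end
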